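/- Let T: X → Y be a bounded linear operator between Banach spaces, let I ⊆ {0,…,p−1}, and set n := Σ_{i∈I} 2^i < 2^p. Then for every X-valued dyadic martingale (M_0,…,M_p) with M_i = Σ_{j=0}^{2^i−1} x_j h_j (x_j ∈ X, h_j the Haar functions) one has ‖Σ_{i∈I} T dM_i‖_2 ≤ δ(T|W_n, W_n)·‖M_p‖_2. -/

import Mathlib

/-!
With `f := w_n • M_p` one has `‖f‖₂ = ‖M_p‖₂` (as `|w_n| = 1`) and, almost everywhere,
`S_n f = w_n • ∑_{i ∈ I} dM_i`; hence `‖∑ T dM_i‖₂ = ‖T S_n f‖₂ ≤ δ(T|W_n,W_n) ‖f‖₂`.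

The identity for `S_n f` comes from the Walsh expansion of the Haar functions: for
`2^q ≤ j < 2^(q+1)`, `h_j` is a combination of the `w_m` with `2^q ≤ m < 2^(q+1)`, and for those
`m` we have `w_n w_m = w_(n ⊕ m)` with `n ⊕ m < n` exactly when bit `q` of `n` is set, i.e. when
`q ∈ I`. So `S_n`, which keeps the Walsh modes below `n`, keeps `w_n h_j` entirely when `q ∈ I`
and kills it otherwise (and always kills `w_n h_0 = w_n`). Orthonormality of the Walsh system
and the expansion of `h_j` are checked on the dyadic grid of mesh `2^(-p)`, on which all
functions involved are step functions.
-/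

open MeasureTheory
open scoped ENNReal

noncomputable section

/-- The Rademacher function `r_{i+1}` of the paper: `r_1(t) = 1` on `[0,1/2) + ℤ`,
`-1` on `[1/2,1) + ℤ`, and `r_{i+1}(t) = r_1(2^i t)`. -/
def rademacher (i : ℕ) (t : ℝ) : ℝ :=
  if Int.fract (2 ^ i * t) < 1 / 2 then 1 else -1

/-- The `n`-th Walsh function `w_n = ∏_i r_{i+1}^{n_i}` where `n = ∑_i n_i 2^i`. -/
def walsh (n : ℕ) (t : ℝ) : ℝ :=
  ∏ i ∈ Finset.range n, if n.testBit i then rademacher i t else 1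

/-- Lebesgue measure on `[0,1]`. -/
def unitI : Measure ℝ := volume.restrict (Set.Icc 0 1)

/-- `f ∈ L_2^X`: `f : [0,1] → X` is (Bochner) measurable with `∫_0^1 ‖f(t)‖² dt < ∞`. -/
def MemL2 {X : Type*} [NormedAddCommGroup X] (f : ℝ → X) : Prop := MemLp f 2 unitI

/-- `‖f‖_2 = (∫_0^1 ‖f(t)‖² dt)^{1/2}`. -/
def l2norm {X : Type*} [NormedAddCommGroup X] (f : ℝ → X) : ℝ :=
  Real.sqrt (∫ t, ‖f t‖ ^ 2 ∂unitI)

/-- The Walsh–Fourier coefficient `⟨f, w_i⟩ = ∫_0^1 f(t) w_i(t) dt`. -/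
def walshCoeff {X : Type*} [NormedAddCommGroup X] [NormedSpace ℝ X] (f : ℝ → X) (i : ℕ) : X :=
  ∫ t, walsh i t • f t ∂unitI

/-- The `n`-th Walsh partial sum `S_n(f) = ∑_{i<n} ⟨f,w_i⟩ w_i`. -/
def walshSum {X : Type*} [NormedAddCommGroup X] [NormedSpace ℝ X] (n : ℕ) (f : ℝ → X) :
    ℝ → X :=
  fun t => ∑ i ∈ Finset.range n, walsh i t • walshCoeff f i

/-- The ideal norm `δ(T | W_n, W_n)`: the least `c ≥ 0` with
`‖T ∘ S_n(f)‖_2 ≤ c ‖f‖_2` for all `f ∈ L_2^X`. -/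
def walshDelta {X Y : Type*} [NormedAddCommGroup X] [NormedSpace ℝ X]
    [NormedAddCommGroup Y] [NormedSpace ℝ Y] (T : X →L[ℝ] Y) (n : ℕ) : ℝ :=
  sInf {c : ℝ | 0 ≤ c ∧ ∀ f : ℝ → X, MemL2 f →
    l2norm (fun t => T (walshSum n f t)) ≤ c * l2norm f}

/-- The `j`-th Haar function (extended `1`-periodically): `h_0 ≡ 1` and, for
`j = 2^{p-1} + m` with `0 ≤ m < 2^{p-1}`, `h_j = 2^{(p-1)/2}` on `Δ_{2m+1}^{(p)}`,
`-2^{(p-1)/2}` on `Δ_{2m+2}^{(p)}` and `0` otherwise. -/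
def haar (j : ℕ) (t : ℝ) : ℝ :=
  if j = 0 then 1
  else
    let q := Nat.log2 j
    let m := j - 2 ^ q
    if (2 * m : ℝ) / 2 ^ (q + 1) ≤ Int.fract t ∧ Int.fract t < (2 * m + 1 : ℝ) / 2 ^ (q + 1)
      then (2 : ℝ) ^ ((q : ℝ) / 2)
    else if (2 * m + 1 : ℝ) / 2 ^ (q + 1) ≤ Int.fract t ∧
        Int.fract t < (2 * m + 2 : ℝ) / 2 ^ (q + 1)
      then -((2 : ℝ) ^ ((q : ℝ) / 2))
    else 0

open Finset

namespace Nat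

theorem testBit_sum_two_pow (I : Finset ℕ) (q : ℕ) : (∑ i ∈ I, 2 ^ i).testBit q ↔ q ∈ I := by
  rw [← mem_bitIndices, ← List.mem_toFinset, Finset.toFinset_bitIndices_sum_two_pow]

theorem two_pow_xor_of_lt {a b : ℕ} (ha : a < 2 ^ b) : 2 ^ b ^^^ a = 2 ^ b + a := by
  refine eq_of_testBit_eq fun i => ?_
  rw [testBit_xor, testBit_two_pow]
  rcases lt_trichotomy i b with hib | rfl | hbi
  · simp [hib.ne', testBit_two_pow_add_gt hib]
  · simp [testBit_two_pow_add_eq, testBit_lt_two_pow ha]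
  · have hlt : ∀ {c}, c < 2 ^ (b + 1) → c.testBit i = false := fun hc =>
      testBit_lt_two_pow (hc.trans_le (Nat.pow_le_pow_right two_pos hbi))
    rw [hlt (by omega), hlt (by rw [pow_succ]; omega)]
    simp [hbi.ne]

/-- For `m` with leading bit `q`, `n ^^^ m` and `n` first differ at bit `q`. -/
theorem xor_lt_self_iff {m n q : ℕ} (h₁ : 2 ^ q ≤ m) (h₂ : m < 2 ^ (q + 1)) :
    n ^^^ m < n ↔ n.testBit q := by
  have hm : m.testBit q := by
    have hm0 : m ≠ 0 := by have := Nat.one_le_two_pow (n := q); omega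
    rw [← log2_eq_iff hm0 |>.2 ⟨h₁, h₂⟩]; exact testBit_log2 hm0
  have high : ∀ j, q < j → (n ^^^ m).testBit j = n.testBit j := fun j hj => by
    rw [testBit_xor, testBit_lt_two_pow (h₂.trans_le (Nat.pow_le_pow_right two_pos hj)),
      Bool.xor_false]
  cases hn : n.testBit q
  · refine iff_of_false (not_lt.2 (lt_of_testBit q hn ?_ fun j hj => (high j hj).symm).le) (by simp)
    simp [testBit_xor, hn, hm]
  · exact iff_of_true (lt_of_testBit q (by simp [testBit_xor, hn, hm]) hn high) rfl

end Nat

/-- The value of `w_m` on the `k`-th dyadic interval of length `2⁻ᵖ` (for `m < 2 ^ p`); bit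
`p - 1 - i` of `k` is the `(i+1)`-st binary digit of the points of that interval. -/
def discreteWalsh (p m k : ℕ) : ℝ :=
  ∏ i ∈ range p, if m.testBit i && k.testBit (p - 1 - i) then -1 else 1

theorem discreteWalsh_mul_right (p m k k' : ℕ) :
    discreteWalsh p m k * discreteWalsh p m k' = discreteWalsh p m (k ^^^ k') := by
  simp only [discreteWalsh, ← prod_mul_distrib, Nat.testBit_xor]
  refine prod_congr rfl fun i _ => ?_
  cases m.testBit i <;> cases k.testBit (p - 1 - i) <;> cases k'.testBit (p - 1 - i) <;> norm_num

theorem discreteWalsh_mul_left (p m m' k : ℕ) :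
    discreteWalsh p m k * discreteWalsh p m' k = discreteWalsh p (m ^^^ m') k := by
  simp only [discreteWalsh, ← prod_mul_distrib, Nat.testBit_xor]
  refine prod_congr rfl fun i _ => ?_
  cases m.testBit i <;> cases m'.testBit i <;> cases k.testBit (p - 1 - i) <;> norm_num

theorem discreteWalsh_xor_two_pow_right {p b : ℕ} (hb : b < p) (m k : ℕ) :
    discreteWalsh p m (k ^^^ 2 ^ b) =
      (if m.testBit (p - 1 - b) then -1 else 1) * discreteWalsh p m k := by
  rw [← discreteWalsh_mul_right, mul_comm, discreteWalsh, prod_eq_single (p - 1 - b)]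
  · rw [Nat.sub_sub_self (by omega), Nat.testBit_two_pow_self, Bool.and_true]
  · intro i hi hne
    rw [Nat.testBit_two_pow, decide_eq_false (by rw [mem_range] at hi; omega)]
    simp
  · intro h; exact absurd (mem_range.2 (by omega)) h

theorem discreteWalsh_xor_two_pow_left {p i : ℕ} (hi : i < p) (m k : ℕ) :
    discreteWalsh p (m ^^^ 2 ^ i) k =
      (if k.testBit (p - 1 - i) then -1 else 1) * discreteWalsh p m k := by
  rw [← discreteWalsh_mul_left, mul_comm, discreteWalsh, prod_eq_single i]
  · rw [Nat.testBit_two_pow_self, Bool.true_and]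
  · intro i' _ hne
    rw [Nat.testBit_two_pow, decide_eq_false (Ne.symm hne)]
    simp
  · intro h; exact absurd (mem_range.2 hi) h

theorem sum_range_two_pow_eq_zero_of_xor_eq_neg {f : ℕ → ℝ} {p b : ℕ} (hb : b < p)
    (hf : ∀ k, f (k ^^^ 2 ^ b) = -f k) : ∑ k ∈ range (2 ^ p), f k = 0 := by
  refine sum_involution (fun k _ => k ^^^ 2 ^ b) (fun k _ => by rw [hf, add_neg_cancel])
    (fun k _ _ h => ?_) (fun k hk => ?_) (fun k _ => xor_cancel_right _ _)
  · simpa using congrArg (· ^^^ k) h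
  · exact mem_range.2 (Nat.xor_lt_two_pow (mem_range.1 hk) (Nat.pow_lt_pow_right one_lt_two hb))

theorem sum_discreteWalsh_right {p m : ℕ} (hm : m < 2 ^ p) (h0 : m ≠ 0) :
    ∑ k ∈ range (2 ^ p), discreteWalsh p m k = 0 := by
  have hq : m.log2 < p := (Nat.log2_lt h0).2 hm
  refine sum_range_two_pow_eq_zero_of_xor_eq_neg (b := p - 1 - m.log2) (by omega) fun k => ?_
  rw [discreteWalsh_xor_two_pow_right (by omega), Nat.sub_sub_self (by omega), Nat.testBit_log2 h0]
  simp

theorem sum_discreteWalsh_left {p k : ℕ} (hk : k < 2 ^ p) (h0 : k ≠ 0) :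
    ∑ m ∈ range (2 ^ p), discreteWalsh p m k = 0 := by
  have hq : k.log2 < p := (Nat.log2_lt h0).2 hk
  refine sum_range_two_pow_eq_zero_of_xor_eq_neg (b := p - 1 - k.log2) (by omega) fun m => ?_
  rw [discreteWalsh_xor_two_pow_left (by omega), Nat.sub_sub_self (by omega), Nat.testBit_log2 h0]
  simp

theorem sum_discreteWalsh_mul_discreteWalsh {p k k' : ℕ} (hk : k < 2 ^ p) (hk' : k' < 2 ^ p) :
    ∑ m ∈ range (2 ^ p), discreteWalsh p m k * discreteWalsh p m k' =
      if k = k' then 2 ^ p else 0 := by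
  simp_rw [discreteWalsh_mul_right]
  split_ifs with h
  · simp [h, discreteWalsh]
  · exact sum_discreteWalsh_left (Nat.xor_lt_two_pow hk hk') (by simpa [xor_eq_zero_iff] using h)

theorem natFloor_two_pow_mul_lt {t : ℝ} (ht : t ∈ Set.Ico (0 : ℝ) 1) (p : ℕ) :
    ⌊2 ^ p * t⌋₊ < 2 ^ p := by
  rw [Nat.floor_lt (mul_nonneg (by positivity) ht.1)]
  push_cast
  nlinarith [ht.2, pow_pos (two_pos : (0 : ℝ) < 2) p]

theorem natFloor_two_pow_mul_div (t : ℝ) {q p : ℕ} (hqp : q ≤ p) :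
    ⌊2 ^ p * t⌋₊ / 2 ^ (p - q) = ⌊2 ^ q * t⌋₊ := by
  rw [← Nat.floor_div_natCast]
  congr 1
  rw [Nat.cast_pow, Nat.cast_ofNat, ← Nat.sub_add_cancel hqp, pow_add, Nat.add_sub_cancel]
  field_simp

theorem natFloor_two_pow_mul_eq_iff {t : ℝ} (ht : 0 ≤ t) {p k : ℕ} :
    ⌊2 ^ p * t⌋₊ = k ↔ (k : ℝ) / 2 ^ p ≤ t ∧ t < (k + 1) / 2 ^ p := by
  rw [Nat.floor_eq_iff (mul_nonneg (by positivity) ht), div_le_iff₀ (by positivity),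
    lt_div_iff₀ (by positivity), mul_comm t]

theorem integral_comp_natFloor_two_pow_mul (p : ℕ) (F : ℕ → ℝ) :
    ∫ t, F ⌊2 ^ p * t⌋₊ ∂unitI = (2 ^ p)⁻¹ * ∑ k ∈ range (2 ^ p), F k := by
  set a : ℕ → ℝ := fun k => k / 2 ^ p
  have ha : ∀ k, a k ≤ a (k + 1) := fun k => by simp only [a]; gcongr; simp
  have piece : ∀ k,
      Set.EqOn (fun _ => F k) (fun t => F ⌊2 ^ p * t⌋₊) (Set.uIoo (a k) (a (k + 1))) := by
    intro k t ht
    rw [Set.uIoo_of_le (ha k)] at ht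
    have ht0 : 0 ≤ t := le_trans (by positivity) ht.1.le
    have hk : ⌊2 ^ p * t⌋₊ = k := (natFloor_two_pow_mul_eq_iff ht0).2
      ⟨ht.1.le, by simpa [a] using ht.2⟩
    simp only [hk]
  have hint : ∀ k < 2 ^ p, IntervalIntegrable (fun t => F ⌊2 ^ p * t⌋₊) volume (a k) (a (k + 1)) :=
    fun k _ => intervalIntegrable_const.congr_uIoo (piece k)
  have h0 : a 0 = 0 := by simp [a]
  have h1 : a (2 ^ p) = 1 := by simp [a]
  rw [unitI, integral_Icc_eq_integral_Ioc, ← intervalIntegral.integral_of_le zero_le_one,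
    ← h0, ← h1, ← intervalIntegral.sum_integral_adjacent_intervals hint, mul_sum]
  refine sum_congr rfl fun k _ => ?_
  rw [← intervalIntegral.integral_congr_uIoo (piece k), intervalIntegral.integral_const,
    smul_eq_mul]
  simp only [a]
  push_cast
  ring

instance : IsProbabilityMeasure unitI := ⟨by simp [unitI]⟩

theorem ae_mem_Ico_unitI : ∀ᵐ t ∂unitI, t ∈ Set.Ico (0 : ℝ) 1 := by
  rw [unitI, Measure.restrict_congr_set Ico_ae_eq_Icc.symm]
  exact ae_restrict_mem measurableSet_Ico

theorem Int.fract_lt_half_iff {x : ℝ} (hx : 0 ≤ x) : Int.fract x < 1 / 2 ↔ ⌊2 * x⌋₊ % 2 = 0 := by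
  obtain ⟨hK₁, hK₂⟩ := (Nat.floor_eq_iff (by positivity : (0 : ℝ) ≤ 2 * x)).1 rfl
  set K := ⌊2 * x⌋₊
  have hdiv : (K : ℝ) = 2 * (K / 2 : ℕ) + (K % 2 : ℕ) := by
    exact_mod_cast (Nat.div_add_mod K 2).symm
  have hmod : ((K % 2 : ℕ) : ℝ) ≤ 1 := by exact_mod_cast Nat.le_of_lt_succ (Nat.mod_lt K two_pos)
  have hfl : ⌊x⌋ = ((K / 2 : ℕ) : ℤ) := by
    rw [Int.floor_eq_iff, Int.cast_natCast]
    constructor <;> linarith [(K % 2 : ℕ).cast_nonneg (α := ℝ)]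
  rw [← Int.self_sub_floor, hfl, Int.cast_natCast]
  rcases Nat.mod_two_eq_zero_or_one K with h | h <;> rw [h] at hdiv ⊢ <;> push_cast at hdiv
  · exact iff_of_true (by linarith) rfl
  · exact iff_of_false (by linarith) (by simp)

theorem rademacher_eq_of_nonneg {t : ℝ} (ht : 0 ≤ t) (i : ℕ) :
    rademacher i t = if ⌊2 ^ (i + 1) * t⌋₊ % 2 = 0 then 1 else -1 := by
  simp only [rademacher, Int.fract_lt_half_iff (by positivity : 0 ≤ 2 ^ i * t), ← mul_assoc,
    ← pow_succ']

theorem rademacher_eq_ite_testBit {p i : ℕ} (hi : i < p) {t : ℝ} (ht : 0 ≤ t) :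
    rademacher i t = if (⌊2 ^ p * t⌋₊).testBit (p - 1 - i) then -1 else 1 := by
  rw [rademacher_eq_of_nonneg ht, Nat.testBit_eq_decide_div_mod_eq,
    show p - 1 - i = p - (i + 1) by omega, natFloor_two_pow_mul_div t (by omega)]
  rcases Nat.mod_two_eq_zero_or_one ⌊2 ^ (i + 1) * t⌋₊ with h | h <;> simp [h]

theorem rademacher_mul_self (i : ℕ) (t : ℝ) : rademacher i t * rademacher i t = 1 := by
  rw [rademacher]; split_ifs <;> norm_num

theorem measurable_rademacher (i : ℕ) : Measurable (rademacher i) :=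
  Measurable.ite
    (measurableSet_lt (measurable_fract.comp (measurable_const_mul _)) measurable_const)
    measurable_const measurable_const

theorem walsh_eq_prod_range {m N : ℕ} (hN : m < 2 ^ N) (t : ℝ) :
    walsh m t = ∏ i ∈ range N, if m.testBit i then rademacher i t else 1 := by
  have extend : ∀ {N N'}, m < 2 ^ N → N ≤ N' →
      ∏ i ∈ range N, (if m.testBit i then rademacher i t else 1) =
        ∏ i ∈ range N', if m.testBit i then rademacher i t else 1 := fun hN hle =>
    prod_subset (range_subset_range.2 hle) fun i _ hi => by
      rw [Nat.testBit_lt_two_pow (hN.trans_le (Nat.pow_le_pow_right two_pos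
        (not_lt.1 (mem_range.not.1 hi))))]
      rfl
  rw [walsh, extend Nat.lt_two_pow_self (le_max_left m N), extend hN (le_max_right m N)]

theorem walsh_eq_discreteWalsh {p m : ℕ} (hm : m < 2 ^ p) {t : ℝ} (ht : 0 ≤ t) :
    walsh m t = discreteWalsh p m ⌊2 ^ p * t⌋₊ := by
  rw [walsh_eq_prod_range hm, discreteWalsh]
  refine prod_congr rfl fun i hi => ?_
  rw [rademacher_eq_ite_testBit (mem_range.1 hi) ht]
  cases m.testBit i <;> simp

@[simp] theorem walsh_zero (t : ℝ) : walsh 0 t = 1 := by simp [walsh]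

theorem walsh_two_pow (q : ℕ) (t : ℝ) : walsh (2 ^ q) t = rademacher q t := by
  rw [walsh_eq_prod_range (Nat.pow_lt_pow_right one_lt_two (Nat.lt_succ_self q)),
    prod_eq_single q (fun i _ hi => by simp [Ne.symm hi]) (by simp)]
  simp

theorem walsh_mul (a b : ℕ) (t : ℝ) : walsh a t * walsh b t = walsh (a ^^^ b) t := by
  have hlt : ∀ c, c ≤ a + b → c < 2 ^ (a + b) := fun c hc =>
    Nat.lt_two_pow_self.trans_le (Nat.pow_le_pow_right two_pos hc)
  rw [walsh_eq_prod_range (hlt a (by omega)), walsh_eq_prod_range (hlt b (by omega)),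
    walsh_eq_prod_range (Nat.xor_lt_two_pow (hlt a (by omega)) (hlt b (by omega))),
    ← prod_mul_distrib]
  refine prod_congr rfl fun i _ => ?_
  rw [Nat.testBit_xor]
  cases a.testBit i <;> cases b.testBit i <;> simp [rademacher_mul_self]

theorem abs_walsh (m : ℕ) (t : ℝ) : |walsh m t| = 1 := by
  have h := walsh_mul m m t
  rw [Nat.xor_self, walsh_zero] at h
  rcases mul_self_eq_one_iff.1 h with h | h <;> simp [h]

theorem measurable_walsh (m : ℕ) : Measurable (walsh m) :=
  Finset.measurable_prod _ fun i _ => by cases m.testBit i <;> simp [measurable_rademacher]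

theorem norm_walsh_smul {E : Type*} [NormedAddCommGroup E] [NormedSpace ℝ E] (m : ℕ) (t : ℝ)
    (y : E) : ‖walsh m t • y‖ = ‖y‖ := by
  rw [norm_smul, Real.norm_eq_abs, abs_walsh, one_mul]

theorem integral_walsh (m : ℕ) : ∫ t, walsh m t ∂unitI = if m = 0 then 1 else 0 := by
  split_ifs with hm
  · simp [hm]
  · rw [integral_congr_ae (ae_mem_Ico_unitI.mono fun t ht =>
        walsh_eq_discreteWalsh Nat.lt_two_pow_self ht.1),
      integral_comp_natFloor_two_pow_mul, sum_discreteWalsh_right Nat.lt_two_pow_self hm, mul_zero]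

section WalshPolynomial

variable {X : Type*} [NormedAddCommGroup X] [NormedSpace ℝ X] {ι : Type*}

theorem memL2_walsh_smul (m : ℕ) (y : X) : MemL2 fun t => walsh m t • y :=
  MemLp.of_bound ((measurable_walsh m).stronglyMeasurable.smul_const y).aestronglyMeasurable ‖y‖
    (ae_of_all _ fun t => (norm_walsh_smul m t y).le)

theorem memL2_sum_walsh_smul (s : Finset ι) (g : ι → ℕ) (y : ι → X) :
    MemL2 fun t => ∑ a ∈ s, walsh (g a) t • y a :=
  memLp_finsetSum s fun a _ => memL2_walsh_smul (g a) (y a)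

theorem walshSum_congr_ae {f g : ℝ → X} (h : f =ᵐ[unitI] g) (n : ℕ) :
    walshSum n f = walshSum n g := by
  funext t
  refine sum_congr rfl fun i _ => ?_
  rw [walshCoeff, walshCoeff, integral_congr_ae (h.mono fun s hs => congrArg (walsh i s • ·) hs)]

variable [CompleteSpace X]

theorem walshCoeff_sum_walsh_smul (s : Finset ι) (g : ι → ℕ) (y : ι → X) (i : ℕ) :
    walshCoeff (fun t => ∑ a ∈ s, walsh (g a) t • y a) i = ∑ a ∈ s with g a = i, y a := by
  simp only [walshCoeff, smul_sum, smul_smul, walsh_mul]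
  rw [integral_finsetSum _ fun a _ => (memL2_walsh_smul _ (y a)).integrable one_le_two, sum_filter]
  refine sum_congr rfl fun a _ => ?_
  rw [integral_smul_const, integral_walsh]
  simp only [xor_eq_zero_iff, eq_comm (a := i)]
  split_ifs <;> simp

theorem walshSum_sum_walsh_smul (n : ℕ) (s : Finset ι) (g : ι → ℕ) (y : ι → X) :
    walshSum n (fun t => ∑ a ∈ s, walsh (g a) t • y a) =
      fun t => ∑ a ∈ s with g a < n, walsh (g a) t • y a := by
  funext t
  simp only [walshSum, walshCoeff_sum_walsh_smul, sum_filter, smul_sum, smul_ite, smul_zero]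
  rw [sum_comm]
  exact sum_congr rfl fun a _ => by simp only [sum_ite_eq, mem_range]

end WalshPolynomial

/-- The Walsh indices `m` that occur in the expansion of `haar j`: those with the same leading
bit as `j`. -/
def dyadicBlock (j : ℕ) : Finset ℕ :=
  if j = 0 then {0} else Ico (2 ^ j.log2) (2 ^ (j.log2 + 1))

theorem xor_lt_self_iff_of_mem_dyadicBlock {j m : ℕ} (hm : m ∈ dyadicBlock j) (n : ℕ) :
    n ^^^ m < n ↔ j ≠ 0 ∧ n.testBit j.log2 := by
  unfold dyadicBlock at hm
  split_ifs at hm with hj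
  · simp [mem_singleton.1 hm, hj]
  · rw [mem_Ico] at hm
    simp [hj, Nat.xor_lt_self_iff hm.1 hm.2]

theorem haar_eq_of_mem_Ico {j : ℕ} (hj : j ≠ 0) {t : ℝ} (ht : t ∈ Set.Ico (0 : ℝ) 1) :
    haar j t = 2 ^ ((j.log2 : ℝ) / 2) *
      if ⌊2 ^ j.log2 * t⌋₊ = j - 2 ^ j.log2 then rademacher j.log2 t else 0 := by
  simp only [haar, if_neg hj, Int.fract_eq_self.2 ht]
  generalize j.log2 = q
  generalize j - 2 ^ q = r
  have hK := fun c : ℕ => (natFloor_two_pow_mul_eq_iff (p := q + 1) (k := c) ht.1).symm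
  have h₁ : (2 * r : ℝ) / 2 ^ (q + 1) ≤ t ∧ t < (2 * r + 1) / 2 ^ (q + 1) ↔
      ⌊2 ^ (q + 1) * t⌋₊ = 2 * r := by
    convert hK (2 * r) using 3 <;> push_cast <;> rfl
  have h₂ : (2 * r + 1 : ℝ) / 2 ^ (q + 1) ≤ t ∧ t < (2 * r + 2) / 2 ^ (q + 1) ↔
      ⌊2 ^ (q + 1) * t⌋₊ = 2 * r + 1 := by
    convert hK (2 * r + 1) using 3 <;> push_cast <;> ring
  have hdiv := natFloor_two_pow_mul_div t (p := q + 1) (q := q) (by omega)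
  rw [Nat.add_sub_cancel_left, pow_one] at hdiv
  simp only [h₁, h₂, rademacher_eq_of_nonneg ht.1, ← hdiv]
  split_ifs <;> first | (exfalso; omega) | ring

theorem ite_natFloor_eq_sum_walsh {q r : ℕ} (hr : r < 2 ^ q) {t : ℝ}
    (ht : t ∈ Set.Ico (0 : ℝ) 1) :
    (if ⌊2 ^ q * t⌋₊ = r then 1 else 0 : ℝ) =
      (2 ^ q)⁻¹ * ∑ k ∈ range (2 ^ q), discreteWalsh q k r * walsh k t := by
  rw [sum_congr rfl fun k hk => by rw [walsh_eq_discreteWalsh (mem_range.1 hk) ht.1],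
    sum_discreteWalsh_mul_discreteWalsh hr (natFloor_two_pow_mul_lt ht q)]
  rcases eq_or_ne ⌊2 ^ q * t⌋₊ r with h | h
  · rw [if_pos h, if_pos h.symm, inv_mul_cancel₀ (by positivity)]
  · rw [if_neg h, if_neg (Ne.symm h), mul_zero]

/-- From `h_j = 2^(q/2) 1_Δ r_(q+1)`, where `Δ` is the dyadic interval of length `2^(-q)` with
index `j - 2^q`, the Walsh–Dirichlet expansion `1_Δ = 2^(-q) ∑_(k<2^q) w_k(Δ) w_k`, and
`w_k r_(q+1) = w_(2^q+k)`. -/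
def haarWalshCoeff (j m : ℕ) : ℝ :=
  if j = 0 then 1
  else 2 ^ ((j.log2 : ℝ) / 2) * (2 ^ j.log2)⁻¹ *
    discreteWalsh j.log2 (m - 2 ^ j.log2) (j - 2 ^ j.log2)

theorem haar_eq_sum_walsh (j : ℕ) {t : ℝ} (ht : t ∈ Set.Ico (0 : ℝ) 1) :
    haar j t = ∑ m ∈ dyadicBlock j, haarWalshCoeff j m * walsh m t := by
  rcases eq_or_ne j 0 with rfl | hj
  · simp [haar, dyadicBlock, haarWalshCoeff]
  set q := j.log2
  have hr : j - 2 ^ q < 2 ^ q := by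
    have : j < 2 ^ (q + 1) := Nat.lt_log2_self
    rw [pow_succ] at this; omega
  have hblock : 2 ^ (q + 1) - 2 ^ q = 2 ^ q := by rw [pow_succ]; omega
  have hind : (if ⌊2 ^ q * t⌋₊ = j - 2 ^ q then rademacher q t else 0) =
      (if ⌊2 ^ q * t⌋₊ = j - 2 ^ q then 1 else 0) * rademacher q t := by
    split_ifs <;> simp
  rw [haar_eq_of_mem_Ico hj ht, hind, ite_natFloor_eq_sum_walsh hr ht, dyadicBlock, if_neg hj,
    sum_Ico_eq_sum_range, hblock, mul_sum, sum_mul, mul_sum]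
  refine sum_congr rfl fun k hk => ?_
  rw [haarWalshCoeff, if_neg hj, Nat.add_sub_cancel_left, ← Nat.two_pow_xor_of_lt (mem_range.1 hk),
    ← walsh_mul, walsh_two_pow]
  ring

theorem walsh_smul_haar_smul_eq {X : Type*} [NormedAddCommGroup X] [NormedSpace ℝ X]
    (n j : ℕ) (y : X) {t : ℝ} (ht : t ∈ Set.Ico (0 : ℝ) 1) :
    walsh n t • haar j t • y = ∑ m ∈ dyadicBlock j, walsh (n ^^^ m) t • haarWalshCoeff j m • y := by
  rw [haar_eq_sum_walsh j ht, sum_smul, smul_sum]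
  refine sum_congr rfl fun m _ => ?_
  rw [← walsh_mul, smul_smul, smul_smul]
  congr 1
  ring

section HaarSeries

variable {X : Type*} [NormedAddCommGroup X] [NormedSpace ℝ X]

theorem walsh_smul_sum_haar_ae_eq (n N : ℕ) (x : ℕ → X) :
    (fun t => walsh n t • ∑ j ∈ range N, haar j t • x j) =ᵐ[unitI]
      fun t => ∑ a ∈ (range N).sigma dyadicBlock,
        walsh (n ^^^ a.2) t • haarWalshCoeff a.1 a.2 • x a.1 := by
  filter_upwards [ae_mem_Ico_unitI] with t ht
  rw [sum_sigma, smul_sum]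
  exact sum_congr rfl fun j _ => walsh_smul_haar_smul_eq n j (x j) ht

theorem memL2_walsh_smul_sum_haar (n N : ℕ) (x : ℕ → X) :
    MemL2 fun t => walsh n t • ∑ j ∈ range N, haar j t • x j :=
  MemLp.ae_eq (walsh_smul_sum_haar_ae_eq n N x).symm (memL2_sum_walsh_smul _ _ _)

theorem walshSum_walsh_smul_sum_haar_ae_eq [CompleteSpace X] (n N : ℕ) (x : ℕ → X) :
    walshSum n (fun t => walsh n t • ∑ j ∈ range N, haar j t • x j) =ᵐ[unitI]
      fun t => walsh n t • ∑ j ∈ range N with j ≠ 0 ∧ n.testBit j.log2, haar j t • x j := by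
  rw [walshSum_congr_ae (walsh_smul_sum_haar_ae_eq n N x), walshSum_sum_walsh_smul]
  filter_upwards [ae_mem_Ico_unitI] with t ht
  rw [sum_filter, sum_sigma, sum_filter, smul_sum]
  refine sum_congr rfl fun j _ => ?_
  rw [smul_ite, smul_zero, walsh_smul_haar_smul_eq n j (x j) ht]
  split_ifs with hc
  · exact sum_congr rfl fun m hm => if_pos ((xor_lt_self_iff_of_mem_dyadicBlock hm n).2 hc)
  · exact sum_eq_zero fun m hm => if_neg (mt (xor_lt_self_iff_of_mem_dyadicBlock hm n).1 hc)

end HaarSeries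

theorem sum_sub_sum_range_two_pow {M : Type*} [AddCommGroup M] {p : ℕ} {I : Finset ℕ}
    (hI : I ⊆ range p) (F : ℕ → M) :
    ∑ i ∈ I, (∑ j ∈ range (2 ^ (i + 1)), F j - ∑ j ∈ range (2 ^ i), F j) =
      ∑ j ∈ range (2 ^ p) with j ≠ 0 ∧ j.log2 ∈ I, F j := by
  rw [← sum_fiberwise_of_maps_to (s := {j ∈ range (2 ^ p) | j ≠ 0 ∧ j.log2 ∈ I}) (t := I)
    (g := Nat.log2) fun j hj => (mem_filter.1 hj).2.2]
  refine sum_congr rfl fun i hi => ?_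
  rw [← sum_Ico_eq_sub _ (Nat.pow_le_pow_right two_pos i.le_succ)]
  have hip := mem_range.1 (hI hi)
  congr 1
  ext j
  simp only [mem_Ico, mem_filter, mem_range]
  constructor
  · rintro ⟨h₁, h₂⟩
    have hj : j ≠ 0 := by have := Nat.one_le_two_pow (n := i); omega
    have hlog := (Nat.log2_eq_iff hj).2 ⟨h₁, h₂⟩
    exact ⟨⟨h₂.trans_le (Nat.pow_le_pow_right two_pos hip), hj, hlog ▸ hi⟩, hlog⟩
  · rintro ⟨⟨-, hj, -⟩, rfl⟩
    exact (Nat.log2_eq_iff hj).1 rfl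

section L2

variable {X : Type*} [NormedAddCommGroup X]

theorem l2norm_nonneg (f : ℝ → X) : 0 ≤ l2norm f := Real.sqrt_nonneg _

theorem l2norm_congr_norm {X' : Type*} [NormedAddCommGroup X'] {f : ℝ → X} {g : ℝ → X'}
    (h : ∀ᵐ t ∂unitI, ‖f t‖ = ‖g t‖) : l2norm f = l2norm g := by
  rw [l2norm, l2norm, integral_congr_ae (h.mono fun t ht => congrArg (· ^ 2) ht)]

theorem l2norm_le_of_norm_le {f : ℝ → X} {B : ℝ} (hB : 0 ≤ B) (h : ∀ t, ‖f t‖ ≤ B) :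
    l2norm f ≤ B := by
  refine Real.sqrt_le_iff.2 ⟨hB, (Real.le_norm_self _).trans ?_⟩
  have hbound := norm_integral_le_of_norm_le_const (μ := unitI) (f := fun t => ‖f t‖ ^ 2)
    (C := B ^ 2) (ae_of_all _ fun t => by
      rw [norm_pow, norm_norm]; exact pow_le_pow_left₀ (norm_nonneg _) (h t) 2)
  simpa using hbound

/-- Jensen on the probability space `[0,1]`, in the form `Var ‖f‖ ≥ 0`. -/
theorem integral_norm_le_l2norm {f : ℝ → X} (hf : MemL2 f) : ∫ t, ‖f t‖ ∂unitI ≤ l2norm f := by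
  have hvar := ProbabilityTheory.variance_nonneg (fun t => ‖f t‖) unitI
  rw [ProbabilityTheory.variance_eq_sub (MemLp.norm hf)] at hvar
  refine (le_abs_self _).trans (Real.abs_le_sqrt ?_)
  simpa using hvar

variable [NormedSpace ℝ X]

theorem l2norm_walsh_smul (n : ℕ) (f : ℝ → X) :
    l2norm (fun t => walsh n t • f t) = l2norm f :=
  l2norm_congr_norm (ae_of_all _ fun t => norm_walsh_smul n t (f t))

theorem norm_walshCoeff_le {f : ℝ → X} (hf : MemL2 f) (i : ℕ) : ‖walshCoeff f i‖ ≤ l2norm f :=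
  (norm_integral_le_integral_norm _).trans <| by
    simpa only [norm_walsh_smul] using integral_norm_le_l2norm hf

variable {Y : Type*} [NormedAddCommGroup Y] [NormedSpace ℝ Y]

theorem l2norm_walshSum_le (T : X →L[ℝ] Y) (n : ℕ) {f : ℝ → X} (hf : MemL2 f) :
    l2norm (fun t => T (walshSum n f t)) ≤ ‖T‖ * n * l2norm f := by
  refine l2norm_le_of_norm_le (by have := l2norm_nonneg f; positivity) fun t => ?_
  calc ‖T (walshSum n f t)‖ ≤ ‖T‖ * ∑ i ∈ range n, ‖walshCoeff f i‖ := by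
        refine (T.le_opNorm _).trans (mul_le_mul_of_nonneg_left ?_ (norm_nonneg T))
        simpa only [walshSum, norm_walsh_smul] using
          norm_sum_le (range n) fun i => walsh i t • walshCoeff f i
    _ ≤ ‖T‖ * ∑ _i ∈ range n, l2norm f := by
        gcongr with i
        exact norm_walshCoeff_le hf i
    _ = ‖T‖ * n * l2norm f := by rw [sum_const, card_range, nsmul_eq_mul, mul_assoc]

theorem l2norm_walshSum_le_walshDelta_mul (T : X →L[ℝ] Y) (n : ℕ) {f : ℝ → X} (hf : MemL2 f) :
    l2norm (fun t => T (walshSum n f t)) ≤ walshDelta T n * l2norm f := by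
  -- `sInf ∅ = 0`, so an admissible constant has to be exhibited first.
  have hne : {c : ℝ | 0 ≤ c ∧ ∀ g : ℝ → X, MemL2 g →
      l2norm (fun t => T (walshSum n g t)) ≤ c * l2norm g}.Nonempty :=
    ⟨‖T‖ * n, by positivity, fun g hg => l2norm_walshSum_le T n hg⟩
  rcases (l2norm_nonneg f).eq_or_lt with h0 | hpos
  · simpa [← h0] using hne.some_mem.2 f hf
  · rw [← div_le_iff₀ hpos]
    exact le_csInf hne fun c hc => (div_le_iff₀ hpos).2 (hc.2 f hf)

end L2

theorem l2norm_sum_T_dM_le_walshDelta_general {X Y : Type*}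
    [NormedAddCommGroup X] [NormedSpace ℝ X] [CompleteSpace X]
    [NormedAddCommGroup Y] [NormedSpace ℝ Y]
    (T : X →L[ℝ] Y) (p : ℕ) (I : Finset ℕ) (hI : I ⊆ Finset.range p)
    (x : ℕ → X) (M : ℕ → ℝ → X)
    (hM : ∀ i ≤ p, M i = fun t => ∑ j ∈ Finset.range (2 ^ i), haar j t • x j) :
    l2norm (fun t => ∑ i ∈ I, T (M (i + 1) t - M i t)) ≤
      walshDelta T (∑ i ∈ I, 2 ^ i) * l2norm (M p) := by
  set n := ∑ i ∈ I, 2 ^ i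
  have hdM : ∀ t, ∑ i ∈ I, (M (i + 1) t - M i t) =
      ∑ j ∈ range (2 ^ p) with j ≠ 0 ∧ n.testBit j.log2, haar j t • x j := fun t => by
    simp only [n, Nat.testBit_sum_two_pow]
    rw [← sum_sub_sum_range_two_pow hI]
    refine sum_congr rfl fun i hi => ?_
    have := mem_range.1 (hI hi)
    rw [hM (i + 1) (by omega), hM i (by omega)]
  set f : ℝ → X := fun s => walsh n s • M p s
  have hf : f = fun s => walsh n s • ∑ j ∈ range (2 ^ p), haar j s • x j := by
    simp only [f, hM p le_rfl]
  calc l2norm (fun t => ∑ i ∈ I, T (M (i + 1) t - M i t))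
      = l2norm (fun t => T (walshSum n f t)) := by
        refine l2norm_congr_norm ?_
        filter_upwards [hf ▸ walshSum_walsh_smul_sum_haar_ae_eq n (2 ^ p) x] with t ht
        rw [ht, map_smul, norm_walsh_smul, ← map_sum, hdM]
    _ ≤ walshDelta T n * l2norm f :=
        l2norm_walshSum_le_walshDelta_mul T n (hf ▸ memL2_walsh_smul_sum_haar n _ x)
    _ = walshDelta T n * l2norm (M p) := by rw [l2norm_walsh_smul]

/-- **Lemma.** Let `T : X → Y` be a bounded operator, `I ⊆ {0, …, p-1}` and
`n := ∑_{i ∈ I} 2^i < 2^p`. Then for every `X`-valued dyadic martingale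
`(M_0, …, M_p)` of the form `M_i = ∑_{j < 2^i} x_j h_j` one has
`‖∑_{i ∈ I} T dM_i‖_2 ≤ δ(T|W_n, W_n) ‖M_p‖_2`. -/
theorem l2norm_sum_T_dM_le_walshDelta {X Y : Type*}
    [NormedAddCommGroup X] [NormedSpace ℝ X] [CompleteSpace X]
    [NormedAddCommGroup Y] [NormedSpace ℝ Y] [CompleteSpace Y]
    (T : X →L[ℝ] Y) (p : ℕ) (I : Finset ℕ) (hI : I ⊆ Finset.range p)
    (x : ℕ → X) (M : ℕ → ℝ → X)
    (hM : ∀ i ≤ p, M i = fun t => ∑ j ∈ Finset.range (2 ^ i), haar j t • x j) :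
    l2norm (fun t => ∑ i ∈ I, T (M (i + 1) t - M i t)) ≤
      walshDelta T (∑ i ∈ I, 2 ^ i) * l2norm (M p) :=
  l2norm_sum_T_dM_le_walshDelta_general T p I hI x M hM
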